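/- For any derivator g, any x₀ ∈ ℝ, any n ∈ ℕ and x ∈ ℝ: g_n(x) = Σ_{k=0}^{n} C(n,k) · g_k^C(x) · g_{n−k}^B(x), i.e., every g-monomial is a binomial combination of monomials of the continuous part and jump part of g. -/

import Mathlib

open MeasureTheory Set Finset

/-- The jump of `g` at `x`: `Δg(x) = g(x⁺) − g(x)`. -/
noncomputable def jumpOf (g : ℝ → ℝ) (x : ℝ) : ℝ := Function.rightLim g x - g x

/-- Oriented Lebesgue–Stieltjes integral: `∫_a^b f dμ = ∫_{[a,b)} f dμ` if `a ≤ b`,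
`= −∫_{[b,a)} f dμ` otherwise. -/
noncomputable def ointeg (μ : MeasureTheory.Measure ℝ) (f : ℝ → ℝ) (a b : ℝ) : ℝ :=
  if a ≤ b then ∫ s in Set.Ico a b, f s ∂μ else - ∫ s in Set.Ico b a, f s ∂μ

/-- The `g`-monomials centered at `c`, defined from the Lebesgue–Stieltjes measure `μ` of `g`:
`g_0 ≡ 1`, `g_{n+1}(x) = (n+1) ∫_c^x g_n dμ` (oriented). -/
noncomputable def gMon (μ : MeasureTheory.Measure ℝ) (c : ℝ) : ℕ → ℝ → ℝ
  | 0 => fun _ => 1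
  | n + 1 => fun x => ((n : ℝ) + 1) * ointeg μ (gMon μ c n) c x

/-- The accumulated jump function `g^B` of `g`: `g^B(x) = Σ_{t∈[0,x)} Δg(t)` for `x ≥ 0`
and `g^B(x) = −Σ_{t∈[x,0)} Δg(t)` for `x < 0`. -/
noncomputable def jumpPart (g : ℝ → ℝ) (x : ℝ) : ℝ :=
  if 0 ≤ x then ∑' t : (Set.Ico (0:ℝ) x), jumpOf g (t : ℝ)
  else - ∑' t : (Set.Ico x (0:ℝ)), jumpOf g (t : ℝ)

/-!
The Lebesgue–Stieltjes measure of `g` splits as `μ = μC + μB`, and `μC` has no atoms because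
removing the jumps of `g` leaves a right-continuous function. For primitives
`F = ∫_c f dμC` and `G = ∫_c h dμB`, Fubini's theorem on `[c, x)²` gives the product rule
`F(x) G(x) = ∫_c^x f G dμC + ∫_c^x F h dμB`; the diagonal, which the half-open intervals
defining `F` and `G` both exclude, is null because `μC` has no atoms. For the monomials this is the Leibniz
rule `g^C_k g^B_m = k ∫ g^C_{k-1} g^B_m dμC + m ∫ g^C_k g^B_{m-1} dμB`, from which the binomial
formula follows by induction on `n`, exactly as for the binomial theorem.
-/

open Filter Topology

section Jumps

variable {g : ℝ → ℝ}

theorem jumpOf_nonneg (hg : Monotone g) (x : ℝ) : 0 ≤ jumpOf g x :=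
  sub_nonneg.2 (hg.le_rightLim le_rfl)

theorem sum_jumpOf_le (hg : Monotone g) (T : Finset ℝ) {a b : ℝ} (hab : a ≤ b)
    (hT : ↑T ⊆ Ico a b) : ∑ t ∈ T, jumpOf g t ≤ g b - g a := by
  classical
  induction T using Finset.induction_on_max generalizing b with
  | empty => simpa using hg hab
  | insert m T hlt ih =>
    have hm : m ∈ Ico a b := hT (mem_insert_self m T)
    have hT' : ↑T ⊆ Ico a m := fun t ht => ⟨(hT (mem_insert_of_mem ht)).1, hlt t ht⟩
    have hjump : jumpOf g m ≤ g b - g m := sub_le_sub_right (hg.rightLim_le hm.2) _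
    rw [sum_insert fun h => (hlt m h).false]
    linarith [ih hm.1 hT']

theorem sum_subtype_jumpOf_le (hg : Monotone g) {a b : ℝ} (hab : a ≤ b) (u : Finset (Ico a b)) :
    ∑ t ∈ u, jumpOf g t ≤ g b - g a := by
  simpa using sum_jumpOf_le hg (u.map (Function.Embedding.subtype _)) hab (by simp)

theorem summable_jumpOf (hg : Monotone g) {a b : ℝ} (hab : a ≤ b) :
    Summable fun t : Ico a b => jumpOf g t :=
  summable_of_sum_le (fun t => jumpOf_nonneg hg t) (sum_subtype_jumpOf_le hg hab)

theorem tsum_jumpOf_le (hg : Monotone g) {a b : ℝ} (hab : a ≤ b) :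
    ∑' t : Ico a b, jumpOf g t ≤ g b - g a :=
  (summable_jumpOf hg hab).tsum_le_of_sum_le (sum_subtype_jumpOf_le hg hab)

theorem tsum_jumpOf_Ico_add (hg : Monotone g) {a b c : ℝ} (hab : a ≤ b) (hbc : b ≤ c) :
    ∑' t : Ico a b, jumpOf g t + ∑' t : Ico b c, jumpOf g t = ∑' t : Ico a c, jumpOf g t := by
  rw [← Ico_union_Ico_eq_Ico hab hbc]
  exact (Summable.tsum_union_disjoint (f := jumpOf g) Ico_disjoint_Ico_same (summable_jumpOf hg hab)
    (summable_jumpOf hg hbc)).symm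

theorem jumpPart_sub_jumpPart (hg : Monotone g) {a b : ℝ} (hab : a ≤ b) :
    jumpPart g b - jumpPart g a = ∑' t : Ico a b, jumpOf g t := by
  unfold jumpPart
  rcases le_or_gt 0 a with ha | ha
  · rw [if_pos ha, if_pos (ha.trans hab), ← tsum_jumpOf_Ico_add hg ha hab]
    ring
  rcases le_or_gt 0 b with hb | hb
  · rw [if_pos hb, if_neg ha.not_ge, ← tsum_jumpOf_Ico_add hg ha.le hb]
    ring
  · rw [if_neg hb.not_ge, if_neg ha.not_ge, ← tsum_jumpOf_Ico_add hg hab hb.le]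
    ring

theorem monotone_jumpPart (hg : Monotone g) : Monotone (jumpPart g) := fun a b hab => by
  have : 0 ≤ ∑' t : Ico a b, jumpOf g t := tsum_nonneg fun t => jumpOf_nonneg hg t
  linarith [jumpPart_sub_jumpPart hg hab]

theorem monotone_sub_jumpPart (hg : Monotone g) : Monotone fun x => g x - jumpPart g x :=
  fun a b hab => by linarith [jumpPart_sub_jumpPart hg hab, tsum_jumpOf_le hg hab]

theorem jumpOf_le_jumpPart_sub (hg : Monotone g) {a b : ℝ} (hab : a < b) :
    jumpOf g a ≤ jumpPart g b - jumpPart g a := by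
  rw [jumpPart_sub_jumpPart hg hab.le]
  exact (summable_jumpOf hg hab.le).le_tsum ⟨a, le_rfl, hab⟩ fun t _ => jumpOf_nonneg hg t

-- Squeeze `g^C(x) ≤ g^C(y) ≤ g^C(x) + (g(y) - g(x⁺))` for `y > x`.
theorem continuousWithinAt_Ioi_sub_jumpPart (hg : Monotone g) (x : ℝ) :
    ContinuousWithinAt (fun y => g y - jumpPart g y) (Ioi x) x := by
  have hlim : Tendsto (fun y => g x - jumpPart g x + (g y - Function.rightLim g x))
      (𝓝[>] x) (𝓝 (g x - jumpPart g x)) := by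
    simpa using tendsto_const_nhds.add ((hg.tendsto_rightLim x).sub_const (Function.rightLim g x))
  refine tendsto_of_tendsto_of_tendsto_of_le_of_le' tendsto_const_nhds hlim ?_ ?_
  all_goals filter_upwards [self_mem_nhdsWithin] with y (hy : x < y)
  · exact monotone_sub_jumpPart hg hy.le
  · linarith [jumpOf_le_jumpPart_sub hg hy, show jumpOf g x = Function.rightLim g x - g x from rfl]

end Jumps

section StieltjesMeasure

variable {ν ν₁ ν₂ : Measure ℝ}

theorem isLocallyFiniteMeasure_of_measure_Ico {F : ℝ → ℝ}
    (hν : ∀ a b, a ≤ b → ν (Ico a b) = ENNReal.ofReal (F b - F a)) :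
    IsLocallyFiniteMeasure ν :=
  ⟨fun x => ⟨Ioo (x - 1) (x + 1), Ioo_mem_nhds (by linarith) (by linarith),
    (measure_mono Set.Ioo_subset_Ico_self).trans_lt <| by
      rw [hν _ _ (by linarith)]; exact ENNReal.ofReal_lt_top⟩⟩

theorem nullSingletonClass_of_measure_Ico {F : ℝ → ℝ}
    (hF : ∀ x, ContinuousWithinAt F (Ioi x) x)
    (hν : ∀ a b, a ≤ b → ν (Ico a b) = ENNReal.ofReal (F b - F a)) :
    NullSingletonClass ν := by
  refine ⟨fun x => le_antisymm ?_ bot_le⟩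
  have hlim : Tendsto (fun y => ENNReal.ofReal (F y - F x)) (𝓝[>] x) (𝓝 0) := by
    simpa using ENNReal.tendsto_ofReal ((hF x).tendsto.sub_const (F x))
  refine ge_of_tendsto hlim ?_
  filter_upwards [self_mem_nhdsWithin] with y (hy : x < y)
  rw [← hν x y hy.le]
  exact measure_mono (singleton_subset_iff.2 ⟨le_rfl, hy⟩)

theorem eq_add_of_measure_Ico {F₁ F₂ : ℝ → ℝ} (hF₁ : Monotone F₁) (hF₂ : Monotone F₂)
    (hν : ∀ a b, a ≤ b → ν (Ico a b) = ENNReal.ofReal ((F₁ b + F₂ b) - (F₁ a + F₂ a)))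
    (hν₁ : ∀ a b, a ≤ b → ν₁ (Ico a b) = ENNReal.ofReal (F₁ b - F₁ a))
    (hν₂ : ∀ a b, a ≤ b → ν₂ (Ico a b) = ENNReal.ofReal (F₂ b - F₂ a)) :
    ν = ν₁ + ν₂ := by
  have := isLocallyFiniteMeasure_of_measure_Ico hν
  refine Measure.ext_of_Ico ν _ fun a b hab => ?_
  rw [Measure.add_apply, hν a b hab.le, hν₁ a b hab.le, hν₂ a b hab.le,
    ← ENNReal.ofReal_add (sub_nonneg.2 (hF₁ hab.le)) (sub_nonneg.2 (hF₂ hab.le))]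
  ring_nf

end StieltjesMeasure

section OrientedIntegral

variable {ν ν₁ ν₂ : Measure ℝ} {f h : ℝ → ℝ}

theorem MeasureTheory.LocallyIntegrable.integrableOn_Ico (hf : LocallyIntegrable f ν) (a b : ℝ) :
    IntegrableOn f (Ico a b) ν :=
  (hf.integrableOn_isCompact isCompact_Icc).mono_set Set.Ico_subset_Icc_self

theorem MeasureTheory.LocallyIntegrable.pos_part (hf : LocallyIntegrable f ν) :
    LocallyIntegrable (fun x => max (f x) 0) ν :=
  fun x => (hf x).imp fun _ h => ⟨h.1, h.2.pos_part⟩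

theorem MeasureTheory.LocallyIntegrable.neg_part (hf : LocallyIntegrable f ν) :
    LocallyIntegrable (fun x => max (-f x) 0) ν :=
  fun x => (hf x).imp fun _ h => ⟨h.1, h.2.neg_part⟩

theorem ointeg_eq_sub (ν : Measure ℝ) (f : ℝ → ℝ) (a b : ℝ) :
    ointeg ν f a b = ∫ s in Ico a b, f s ∂ν - ∫ s in Ico b a, f s ∂ν := by
  unfold ointeg
  split_ifs with hab
  · simp [Set.Ico_eq_empty_of_le hab]
  · simp [Set.Ico_eq_empty_of_le (le_of_not_ge hab)]

theorem ointeg_of_le {a b : ℝ} (hab : a ≤ b) :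
    ointeg ν f a b = ∫ s in Ico a b, f s ∂ν := if_pos hab

theorem ointeg_of_lt {a b : ℝ} (hba : b < a) :
    ointeg ν f a b = -∫ s in Ico b a, f s ∂ν := if_neg hba.not_ge

theorem ointeg_const_mul (r : ℝ) (a b : ℝ) :
    ointeg ν (fun s => r * f s) a b = r * ointeg ν f a b := by
  simp only [ointeg_eq_sub, integral_const_mul, mul_sub]

theorem ointeg_sub (hf : LocallyIntegrable f ν) (hh : LocallyIntegrable h ν) (a b : ℝ) :
    ointeg ν (fun s => f s - h s) a b = ointeg ν f a b - ointeg ν h a b := by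
  simp only [ointeg_eq_sub, integral_sub (hf.integrableOn_Ico _ _) (hh.integrableOn_Ico _ _)]
  ring

theorem ointeg_finsetSum {ι : Type*} (t : Finset ι) {f : ι → ℝ → ℝ}
    (hf : ∀ i ∈ t, LocallyIntegrable (f i) ν) (a b : ℝ) :
    ointeg ν (fun s => ∑ i ∈ t, f i s) a b = ∑ i ∈ t, ointeg ν (f i) a b := by
  simp only [ointeg_eq_sub, sum_sub_distrib,
    integral_finsetSum t fun i hi => (hf i hi).integrableOn_Ico _ _]

theorem ointeg_add_measure (hf₁ : LocallyIntegrable f ν₁) (hf₂ : LocallyIntegrable f ν₂)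
    (a b : ℝ) : ointeg (ν₁ + ν₂) f a b = ointeg ν₁ f a b + ointeg ν₂ f a b := by
  simp only [ointeg_eq_sub, Measure.restrict_add,
    integral_add_measure (hf₁.integrableOn_Ico _ _) (hf₂.integrableOn_Ico _ _)]
  ring

theorem monotone_ointeg (hf : LocallyIntegrable f ν) (hf₀ : 0 ≤ f) (c : ℝ) :
    Monotone (ointeg ν f c) := fun x y hxy => by
  have hx : ∫ s in Ico c x, f s ∂ν ≤ ∫ s in Ico c y, f s ∂ν :=
    setIntegral_mono_set (hf.integrableOn_Ico c y) (ae_of_all _ hf₀)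
      (Set.Ico_subset_Ico_right hxy).eventuallyLE
  have hy : ∫ s in Ico y c, f s ∂ν ≤ ∫ s in Ico x c, f s ∂ν :=
    setIntegral_mono_set (hf.integrableOn_Ico x c) (ae_of_all _ hf₀)
      (Set.Ico_subset_Ico_left hxy).eventuallyLE
  rw [ointeg_eq_sub, ointeg_eq_sub]
  linarith

theorem ointeg_eq_ointeg_pos_part_sub (hf : LocallyIntegrable f ν) (c x : ℝ) :
    ointeg ν f c x =
      ointeg ν (fun s => max (f s) 0) c x - ointeg ν (fun s => max (-f s) 0) c x := by
  rw [← ointeg_sub hf.pos_part hf.neg_part]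
  simp only [max_zero_sub_max_neg_zero_eq_self]

end OrientedIntegral

structure LocallyBoundedMeasurable (f : ℝ → ℝ) : Prop where
  measurable : Measurable f
  exists_bound : ∀ a b : ℝ, ∃ C, ∀ x ∈ Icc a b, |f x| ≤ C

namespace LocallyBoundedMeasurable

variable {f h : ℝ → ℝ}

theorem const (r : ℝ) : LocallyBoundedMeasurable fun _ => r :=
  ⟨measurable_const, fun _ _ => ⟨|r|, fun _ _ => le_rfl⟩⟩

theorem of_monotone (hf : Monotone f) : LocallyBoundedMeasurable f :=
  ⟨hf.measurable, fun a b => ⟨max |f a| |f b|, fun _ hx =>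
    abs_le_max_abs_abs (hf hx.1) (hf hx.2)⟩⟩

theorem mul (hf : LocallyBoundedMeasurable f) (hh : LocallyBoundedMeasurable h) :
    LocallyBoundedMeasurable fun x => f x * h x := by
  refine ⟨hf.measurable.mul hh.measurable, fun a b => ?_⟩
  obtain ⟨C, hC⟩ := hf.exists_bound a b
  obtain ⟨D, hD⟩ := hh.exists_bound a b
  refine ⟨C * D, fun x hx => ?_⟩
  rw [abs_mul]
  exact mul_le_mul (hC x hx) (hD x hx) (abs_nonneg _) ((abs_nonneg _).trans (hC x hx))

theorem const_mul (hf : LocallyBoundedMeasurable f) (r : ℝ) :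
    LocallyBoundedMeasurable fun x => r * f x :=
  (const r).mul hf

theorem sub (hf : LocallyBoundedMeasurable f) (hh : LocallyBoundedMeasurable h) :
    LocallyBoundedMeasurable fun x => f x - h x := by
  refine ⟨hf.measurable.sub hh.measurable, fun a b => ?_⟩
  obtain ⟨C, hC⟩ := hf.exists_bound a b
  obtain ⟨D, hD⟩ := hh.exists_bound a b
  exact ⟨C + D, fun x hx => (abs_sub _ _).trans (add_le_add (hC x hx) (hD x hx))⟩

theorem locallyIntegrable {ν : Measure ℝ} [IsLocallyFiniteMeasure ν]
    (hf : LocallyBoundedMeasurable f) : LocallyIntegrable f ν := fun x => by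
  obtain ⟨C, hC⟩ := hf.exists_bound (x - 1) (x + 1)
  refine ⟨Icc (x - 1) (x + 1), Icc_mem_nhds (by linarith) (by linarith), ?_⟩
  exact Measure.integrableOn_of_bounded measure_Icc_lt_top.ne
    hf.measurable.aestronglyMeasurable ((ae_restrict_iff' measurableSet_Icc).2 (ae_of_all _ hC))

end LocallyBoundedMeasurable

open LocallyBoundedMeasurable in
theorem locallyBoundedMeasurable_ointeg {ν : Measure ℝ} {f : ℝ → ℝ} (hf : LocallyIntegrable f ν)
    (c : ℝ) : LocallyBoundedMeasurable (ointeg ν f c) := by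
  have hpos := monotone_ointeg hf.pos_part (fun s => le_max_right (f s) 0) c
  have hneg := monotone_ointeg hf.neg_part (fun s => le_max_right (-f s) 0) c
  convert (of_monotone hpos).sub (of_monotone hneg) using 1
  exact funext (ointeg_eq_ointeg_pos_part_sub hf c)

section IntegrationByParts

theorem integral_mul_integral_eq_add {α β : Type*} [MeasurableSpace α] [MeasurableSpace β]
    {ν₁ : Measure α} {ν₂ : Measure β} [SFinite ν₁] [SFinite ν₂] {f : α → ℝ} {h : β → ℝ}
    (hf : Integrable f ν₁) (hh : Integrable h ν₂) {S : Set (α × β)} (hS : MeasurableSet S) :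
    (∫ t, f t ∂ν₁) * (∫ s, h s ∂ν₂) =
      ∫ t, f t * (∫ s in Prod.mk t ⁻¹' S, h s ∂ν₂) ∂ν₁ +
        ∫ s, h s * (∫ t in (fun t => (t, s)) ⁻¹' Sᶜ, f t ∂ν₁) ∂ν₂ := by
  have hfh := hf.mul_prod hh
  rw [← integral_prod_mul, ← integral_add_compl hS hfh, ← integral_indicator hS,
    ← integral_indicator hS.compl, integral_prod _ (hfh.indicator hS),
    integral_prod_symm _ (hfh.indicator hS.compl)]
  congr 1
  · congr 1 with t
    rw [← integral_const_mul, ← integral_indicator (measurable_prodMk_left hS)]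
    rfl
  · congr 1 with s
    rw [← integral_const_mul, ← integral_indicator (measurable_prodMk_right hS.compl)]
    congr 1 with t
    by_cases hs : (t, s) ∈ S <;> simp [hs, mul_comm]

variable {ν ν₁ ν₂ : Measure ℝ} {f h : ℝ → ℝ} {c x : ℝ}

theorem setIntegral_Iio_restrict_Ico {t : ℝ} (ht : t ≤ x) :
    ∫ s in Iio t, f s ∂(ν.restrict (Ico c x)) = ∫ s in Ico c t, f s ∂ν := by
  rw [Measure.restrict_restrict measurableSet_Iio]
  congr 2 with s
  simp only [mem_inter_iff, Set.mem_Iio, Set.mem_Ico]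
  exact ⟨fun ⟨h₁, h₂, _⟩ => ⟨h₂, h₁⟩, fun ⟨h₁, h₂⟩ => ⟨h₂, h₁, h₂.trans_le ht⟩⟩

theorem setIntegral_Ici_restrict_Ico {t : ℝ} (ht : x ≤ t) :
    ∫ s in Ici t, f s ∂(ν.restrict (Ico x c)) = ∫ s in Ico t c, f s ∂ν := by
  rw [Measure.restrict_restrict measurableSet_Ici]
  congr 2 with s
  simp only [mem_inter_iff, Set.mem_Ici, Set.mem_Ico]
  exact ⟨fun ⟨h₁, _, h₂⟩ => ⟨h₁, h₂⟩, fun ⟨h₁, h₂⟩ => ⟨h₁, ht.trans h₁, h₂⟩⟩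

variable [SFinite ν₁] [SFinite ν₂] [NullSingletonClass ν₁]

-- Fubini on `[c, x)²` split along `s < t`; the part `t ≤ s` left for the `ν₁`-integral may be
-- taken as `t < s`, because `ν₁` has no atoms.
theorem ointeg_mul_ointeg_of_le (hf : LocallyIntegrable f ν₁) (hh : LocallyIntegrable h ν₂)
    (hcx : c ≤ x) :
    ointeg ν₁ f c x * ointeg ν₂ h c x =
      ointeg ν₁ (fun t => f t * ointeg ν₂ h c t) c x +
        ointeg ν₂ (fun s => ointeg ν₁ f c s * h s) c x := by
  simp only [ointeg_of_le hcx]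
  rw [integral_mul_integral_eq_add (hf.integrableOn_Ico c x) (hh.integrableOn_Ico c x)
    (measurableSet_lt measurable_snd measurable_fst)]
  congr 1
  · refine setIntegral_congr_fun measurableSet_Ico fun t ht => ?_
    rw [ointeg_of_le ht.1, ← setIntegral_Iio_restrict_Ico ht.2.le]
    rfl
  · refine setIntegral_congr_fun measurableSet_Ico fun s hs => ?_
    have hpre : (fun t => (t, s)) ⁻¹' {z : ℝ × ℝ | z.2 < z.1}ᶜ = Iic s := by ext; simp
    rw [ointeg_of_le hs.1, ← setIntegral_Iio_restrict_Ico hs.2.le, hpre,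
      integral_Iic_eq_integral_Iio, mul_comm]

theorem ointeg_mul_ointeg_of_lt (hf : LocallyIntegrable f ν₁) (hh : LocallyIntegrable h ν₂)
    (hxc : x < c) :
    ointeg ν₁ f c x * ointeg ν₂ h c x =
      ointeg ν₁ (fun t => f t * ointeg ν₂ h c t) c x +
        ointeg ν₂ (fun s => ointeg ν₁ f c s * h s) c x := by
  simp only [ointeg_of_lt hxc]
  rw [neg_mul_neg, integral_mul_integral_eq_add (hf.integrableOn_Ico x c)
    (hh.integrableOn_Ico x c) (measurableSet_le measurable_fst measurable_snd)]
  congr 1 <;> rw [← integral_neg]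
  · refine setIntegral_congr_fun measurableSet_Ico fun t ht => ?_
    rw [ointeg_of_lt ht.2, ← setIntegral_Ici_restrict_Ico ht.1]
    simp only [mul_neg, neg_neg]
    rfl
  · refine setIntegral_congr_fun measurableSet_Ico fun s hs => ?_
    have hpre : (fun t => (t, s)) ⁻¹' {z : ℝ × ℝ | z.1 ≤ z.2}ᶜ = Ioi s := by ext; simp
    rw [ointeg_of_lt hs.2, ← setIntegral_Ici_restrict_Ico hs.1, hpre,
      integral_Ici_eq_integral_Ioi, neg_mul, neg_neg, mul_comm]

theorem ointeg_mul_ointeg (hf : LocallyIntegrable f ν₁) (hh : LocallyIntegrable h ν₂)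
    (c x : ℝ) :
    ointeg ν₁ f c x * ointeg ν₂ h c x =
      ointeg ν₁ (fun t => f t * ointeg ν₂ h c t) c x +
        ointeg ν₂ (fun s => ointeg ν₁ f c s * h s) c x := by
  rcases le_or_gt c x with hcx | hxc
  · exact ointeg_mul_ointeg_of_le hf hh hcx
  · exact ointeg_mul_ointeg_of_lt hf hh hxc

end IntegrationByParts

theorem sum_range_choose_mul_eq_of_leibniz {R : Type*} [CommSemiring R] (n : ℕ)
    {u a b : ℕ → ℕ → R}
    (h : ∀ k m, k + m = n + 1 → u k m = k * a (k - 1) m + m * b k (m - 1)) :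
    ∑ k ∈ range (n + 1 + 1), ((n + 1).choose k : R) * u k (n + 1 - k) =
      (n + 1) * ∑ k ∈ range (n + 1), (n.choose k : R) * (a k (n - k) + b k (n - k)) := by
  have ha : ∑ k ∈ range (n + 1 + 1), ((n + 1).choose k : R) * (k * a (k - 1) (n + 1 - k)) =
      (n + 1) * ∑ k ∈ range (n + 1), (n.choose k : R) * a k (n - k) := by
    rw [sum_range_succ', mul_sum]
    simp only [Nat.cast_zero, zero_mul, mul_zero, add_zero, Nat.add_sub_cancel,
      Nat.add_sub_add_right]
    refine sum_congr rfl fun k _ => ?_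
    have hc : ((n + 1).choose (k + 1) : R) * ((k + 1 : ℕ) : R) = (n + 1) * n.choose k := by
      rw [← Nat.cast_mul, ← Nat.add_one_mul_choose_eq]
      push_cast
      rfl
    rw [← mul_assoc, hc, mul_assoc]
  have hb : ∑ k ∈ range (n + 1 + 1),
        ((n + 1).choose k : R) * ((n + 1 - k : ℕ) * b k (n + 1 - k - 1)) =
      (n + 1) * ∑ k ∈ range (n + 1), (n.choose k : R) * b k (n - k) := by
    rw [sum_range_succ, mul_sum]
    simp only [Nat.sub_self, Nat.cast_zero, zero_mul, mul_zero, add_zero]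
    refine sum_congr rfl fun k hk => ?_
    have hc : ((n + 1).choose k : R) * ((n + 1 - k : ℕ) : R) = (n + 1) * n.choose k := by
      rw [← Nat.cast_mul, ← Nat.choose_mul_succ_eq]
      push_cast
      ring
    rw [← mul_assoc, hc, mul_assoc, Nat.sub_right_comm, Nat.add_sub_cancel]
  rw [sum_congr rfl fun k hk => by rw [h k (n + 1 - k) (by rw [Finset.mem_range] at hk; omega)]]
  simp only [mul_add, sum_add_distrib, ha, hb]

section Monomials

variable {ν νC νB : Measure ℝ}

theorem gMon_zero (ν : Measure ℝ) (c : ℝ) : gMon ν c 0 = fun _ => 1 := rfl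

theorem gMon_succ (ν : Measure ℝ) (c : ℝ) (n : ℕ) (x : ℝ) :
    gMon ν c (n + 1) x = (n + 1) * ointeg ν (gMon ν c n) c x := rfl

theorem locallyBoundedMeasurable_gMon [IsLocallyFiniteMeasure ν] (c : ℝ) :
    ∀ n, LocallyBoundedMeasurable (gMon ν c n)
  | 0 => .const 1
  | n + 1 =>
    (locallyBoundedMeasurable_ointeg (locallyBoundedMeasurable_gMon c n).locallyIntegrable
      c).const_mul _

theorem locallyIntegrable_gMon [IsLocallyFiniteMeasure ν] (c : ℝ) (n : ℕ) :
    LocallyIntegrable (gMon ν c n) ν :=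
  (locallyBoundedMeasurable_gMon c n).locallyIntegrable

variable [IsLocallyFiniteMeasure νC] [IsLocallyFiniteMeasure νB] [NullSingletonClass νC]

theorem gMon_succ_mul_gMon_succ (c x : ℝ) (k m : ℕ) :
    gMon νC c (k + 1) x * gMon νB c (m + 1) x =
      (k + 1) * ointeg νC (fun t => gMon νC c k t * gMon νB c (m + 1) t) c x +
        (m + 1) * ointeg νB (fun s => gMon νC c (k + 1) s * gMon νB c m s) c x := by
  have hparts := ointeg_mul_ointeg (locallyIntegrable_gMon (ν := νC) c k)
    (locallyIntegrable_gMon (ν := νB) c m) c x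
  have hC : (fun t => gMon νC c k t * gMon νB c (m + 1) t) =
      fun t => (m + 1) * (gMon νC c k t * ointeg νB (gMon νB c m) c t) :=
    funext fun t => by rw [gMon_succ]; ring
  have hB : (fun s => gMon νC c (k + 1) s * gMon νB c m s) =
      fun s => (k + 1) * (ointeg νC (gMon νC c k) c s * gMon νB c m s) :=
    funext fun s => by rw [gMon_succ]; ring
  rw [hC, hB, ointeg_const_mul, ointeg_const_mul, gMon_succ, gMon_succ]
  linear_combination ((k : ℝ) + 1) * (m + 1) * hparts

theorem gMon_mul_gMon (c x : ℝ) (k m : ℕ) (hkm : 0 < k + m) :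
    gMon νC c k x * gMon νB c m x =
      k * ointeg νC (fun t => gMon νC c (k - 1) t * gMon νB c m t) c x +
        m * ointeg νB (fun s => gMon νC c k s * gMon νB c (m - 1) s) c x := by
  rcases k with _ | k <;> rcases m with _ | m
  · exact absurd hkm (lt_irrefl 0)
  · simp [gMon_zero, gMon_succ]
  · simp [gMon_zero, gMon_succ]
  · push_cast
    exact gMon_succ_mul_gMon_succ c x k m

theorem gMon_add_measure (c x : ℝ) (n : ℕ) :
    gMon (νC + νB) c n x = ∑ k ∈ range (n + 1),
      (n.choose k : ℝ) * gMon νC c k x * gMon νB c (n - k) x := by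
  induction n generalizing x with
  | zero => simp [gMon_zero]
  | succ n ih =>
    have hterm (ν : Measure ℝ) [IsLocallyFiniteMeasure ν] : ∀ k ∈ range (n + 1),
        LocallyIntegrable (fun y => (n.choose k : ℝ) * gMon νC c k y * gMon νB c (n - k) y) ν :=
      fun k _ => (((locallyBoundedMeasurable_gMon c k).const_mul _).mul
        (locallyBoundedMeasurable_gMon c _)).locallyIntegrable
    calc gMon (νC + νB) c (n + 1) x
        = (n + 1) * ∑ k ∈ range (n + 1), (n.choose k : ℝ) *
            (ointeg νC (fun t => gMon νC c k t * gMon νB c (n - k) t) c x +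
              ointeg νB (fun s => gMon νC c k s * gMon νB c (n - k) s) c x) := by
          rw [gMon_succ, funext ih, ointeg_add_measure (locallyIntegrable_finsetSum _ (hterm νC))
            (locallyIntegrable_finsetSum _ (hterm νB)), ointeg_finsetSum _ (hterm νC),
            ointeg_finsetSum _ (hterm νB)]
          simp only [mul_assoc, ointeg_const_mul, mul_add, sum_add_distrib]
      _ = _ := by
          simp only [mul_assoc]
          exact (sum_range_choose_mul_eq_of_leibniz n
            (u := fun k m => gMon νC c k x * gMon νB c m x)
            (a := fun k m => ointeg νC (fun t => gMon νC c k t * gMon νB c m t) c x)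
            (b := fun k m => ointeg νB (fun s => gMon νC c k s * gMon νB c m s) c x)
            fun k m hkm => gMon_mul_gMon c x k m (by omega)).symm

end Monomials

theorem stmt12_general (g : ℝ → ℝ)
    (hg : Monotone g)
    (μ μB μC : MeasureTheory.Measure ℝ)
    (hμ : ∀ a b : ℝ, a ≤ b → μ (Set.Ico a b) = ENNReal.ofReal (g b - g a))
    (hμB : ∀ a b : ℝ, a ≤ b →
      μB (Set.Ico a b) = ENNReal.ofReal (jumpPart g b - jumpPart g a))
    (hμC : ∀ a b : ℝ, a ≤ b →
      μC (Set.Ico a b) = ENNReal.ofReal ((g b - jumpPart g b) - (g a - jumpPart g a)))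
    (x₀ : ℝ) :
    ∀ n : ℕ, ∀ x : ℝ,
      gMon μ x₀ n x = ∑ k ∈ Finset.range (n + 1),
        (n.choose k : ℝ) * gMon μC x₀ k x * gMon μB x₀ (n - k) x := by
  have hsplit : μ = μC + μB :=
    eq_add_of_measure_Ico (monotone_sub_jumpPart hg) (monotone_jumpPart hg) (by simpa using hμ)
      hμC hμB
  have := isLocallyFiniteMeasure_of_measure_Ico hμB
  have := isLocallyFiniteMeasure_of_measure_Ico hμC
  have := nullSingletonClass_of_measure_Ico (continuousWithinAt_Ioi_sub_jumpPart hg) hμC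
  intro n x
  rw [hsplit]
  exact gMon_add_measure x₀ x n

/-- Every `g`-monomial is a binomial combination of the monomials of the continuous part
`g^C = g − g^B` and of the jump part `g^B`:
`g_n(x) = Σ_{k=0}^{n} C(n,k) g_k^C(x) g_{n−k}^B(x)`. -/
theorem stmt12 (g : ℝ → ℝ)
    (hg : Monotone g) (hlc : ∀ x : ℝ, ContinuousWithinAt g (Set.Iio x) x)
    (μ μB μC : MeasureTheory.Measure ℝ)
    (hμ : ∀ a b : ℝ, a ≤ b → μ (Set.Ico a b) = ENNReal.ofReal (g b - g a))
    (hμB : ∀ a b : ℝ, a ≤ b →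
      μB (Set.Ico a b) = ENNReal.ofReal (jumpPart g b - jumpPart g a))
    (hμC : ∀ a b : ℝ, a ≤ b →
      μC (Set.Ico a b) = ENNReal.ofReal ((g b - jumpPart g b) - (g a - jumpPart g a)))
    (x₀ : ℝ) :
    ∀ n : ℕ, ∀ x : ℝ,
      gMon μ x₀ n x = ∑ k ∈ Finset.range (n + 1),
        (n.choose k : ℝ) * gMon μC x₀ k x * gMon μB x₀ (n - k) x :=
  stmt12_general g hg μ μB μC hμ hμB hμC x₀
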